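/- arXiv:2411.12714 — 5 statements merged into one kernel-verified Lean document; each statement's English description precedes it below -/
import Mathlib

section
/- Define U(t) = (2/15)·(t³ + (√(1−t) − 3)·t² + (3 − 2√(1−t))·t + √(1−t) + 1) for t ∈ [0,1]. Then U(0) = U(1) = 4/15, U attains its maximum over [0,1] at t = 11/36 (i.e. U(t) ≤ U(11/36) for all t ∈ [0,1]), and U(11/36) > 4/15. -/
/-! In the variable `s = √(1 - t)` the utility becomes `U = (2/15)·(2 + s⁵(1 - s))`, and
`s ↦ s⁵(1 - s)` vanishes at `s = 0, 1` and peaks at `s = 5/6`, i.e. at `t = 1 - (5/6)² = 11/36`. -/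

lemma pow_five_mul_one_sub_le (s : ℝ) : s ^ 5 * (1 - s) ≤ 5 ^ 5 / 6 ^ 6 := by
  nlinarith [sq_nonneg (s - 5 / 6), sq_nonneg (s ^ 2 * (6 * s - 5)),
    sq_nonneg (s * (6 * s - 5)), sq_nonneg s, sq_nonneg (s ^ 2 - 5 / 6 * s)]

lemma utility_eq_of_sqrt (t : ℝ) (ht : t ≤ 1) :
    (2 / 15) * (t ^ 3 + (√(1 - t) - 3) * t ^ 2 + (3 - 2 * √(1 - t)) * t + √(1 - t) + 1)
      = (2 / 15) * (2 + √(1 - t) ^ 5 * (1 - √(1 - t))) := by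
  have ht' : t = 1 - √(1 - t) ^ 2 := by rw [Real.sq_sqrt (by linarith)]; ring
  generalize √(1 - t) = s at ht'
  subst ht'
  ring

lemma sqrt_one_sub_eleven_div_thirty_six : √(1 - 11 / 36 : ℝ) = 5 / 6 := by
  rw [show (1 - 11 / 36 : ℝ) = (5 / 6) ^ 2 by norm_num, Real.sqrt_sq (by norm_num)]

/-- In the two-firm example with γ = 3 and α = 4/10, the buyer's utility
`U(t) = (2/15)·(t³ + (√(1−t) − 3)·t² + (3 − 2√(1−t))·t + √(1−t) + 1)` on `[0,1]`
satisfies `U(0) = U(1) = 4/15`, is maximized at `t = 11/36`, and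
`U(11/36) > 4/15`. -/
theorem stmt_3 (U : ℝ → ℝ)
    (hU : ∀ t, U t = (2 / 15) * (t ^ 3 + (Real.sqrt (1 - t) - 3) * t ^ 2
        + (3 - 2 * Real.sqrt (1 - t)) * t + Real.sqrt (1 - t) + 1)) :
    U 0 = 4 / 15 ∧ U 1 = 4 / 15 ∧
      (∀ t ∈ Set.Icc (0:ℝ) 1, U t ≤ U (11 / 36)) ∧ 4 / 15 < U (11 / 36) := by
  have hU' : ∀ t ≤ 1, U t = (2 / 15) * (2 + √(1 - t) ^ 5 * (1 - √(1 - t))) :=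
    fun t ht => (hU t).trans (utility_eq_of_sqrt t ht)
  have hmax : U (11 / 36) = (2 / 15) * (2 + 5 ^ 5 / 6 ^ 6) := by
    rw [hU' _ (by norm_num), sqrt_one_sub_eleven_div_thirty_six]; ring
  refine ⟨?_, ?_, fun t ht => ?_, ?_⟩
  · rw [hU' 0 zero_le_one]; norm_num
  · rw [hU' 1 le_rfl]; norm_num
  · rw [hU' t ht.2, hmax]
    linarith [pow_five_mul_one_sub_le √(1 - t)]
  · rw [hmax]; norm_num
end

section
/- Let V : ℝ → ℝ be twice continuously differentiable with V'' ≤ 0, and let P, I : ℝ × (0,1) → ℝ be twice continuously differentiable with P_θ > 0, P_{qq} > 0, P_{qθ} ≥ 0, I_q > 0, I_θ > 0, I_{qq} > 0, I_{qθ} ≥ 0 everywhere. Let D ⊆ ℝ × (0,1) be an open rectangle and q̂ : D → ℝ a continuously differentiable function satisfying V(q̂(x,θ)) − P(q̂(x,θ), θ) = x and V'(q̂(x,θ)) − P_q(q̂(x,θ), θ) > 0 for all (x,θ) ∈ D. Define C(x,θ) := I(q̂(x,θ), θ). Then on D: ∂C/∂x > 0, ∂C/∂θ > 0, ∂²C/∂x²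 > 0, and ∂²C/∂x∂θ > 0; in particular C is strictly increasing in both arguments, strictly convex in x, and strictly supermodular in (x,θ). -/
open Set

private noncomputable def pd1 (F : ℝ × ℝ → ℝ) (p : ℝ × ℝ) : ℝ := fderiv ℝ F p (1, 0)
private noncomputable def pd2 (F : ℝ × ℝ → ℝ) (p : ℝ × ℝ) : ℝ := fderiv ℝ F p (0, 1)

private lemma isOpenS : IsOpen ((univ : Set ℝ) ×ˢ Ioo (0:ℝ) 1) := isOpen_univ.prod isOpen_Ioo

private lemma curve1 (q θ : ℝ) : HasDerivAt (fun y : ℝ => (y, θ)) ((1:ℝ), (0:ℝ)) q :=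
  (hasDerivAt_id q).prodMk (hasDerivAt_const q θ)

private lemma curve2 (q θ : ℝ) : HasDerivAt (fun t : ℝ => (q, t)) ((0:ℝ), (1:ℝ)) θ :=
  (hasDerivAt_const θ q).prodMk (hasDerivAt_id θ)

private lemma hasDerivAt_comp_curve {G : ℝ × ℝ → ℝ} {c : ℝ → ℝ × ℝ} {c' : ℝ × ℝ} {t : ℝ}
    (hG : DifferentiableAt ℝ G (c t)) (hc : HasDerivAt c c' t) :
    HasDerivAt (fun s => G (c s)) (fderiv ℝ G (c t) c') t :=
  hG.hasFDerivAt.comp_hasDerivAt t hc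

private lemma fderiv_pair (G : ℝ × ℝ → ℝ) (z : ℝ × ℝ) (a b : ℝ) :
    fderiv ℝ G z (a, b) = a * pd1 G z + b * pd2 G z := by
  have h : (a, b) = a • ((1:ℝ), (0:ℝ)) + b • ((0:ℝ), (1:ℝ)) := by simp
  rw [h, map_add, map_smul, map_smul]
  simp [pd1, pd2, smul_eq_mul]

private lemma diffS {F : ℝ × ℝ → ℝ} (hF : ContDiffOn ℝ 2 F (univ ×ˢ Ioo 0 1))
    {q θ : ℝ} (hθ : θ ∈ Ioo (0:ℝ) 1) : DifferentiableAt ℝ F (q, θ) :=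
  (hF.differentiableOn two_ne_zero).differentiableAt (isOpenS.mem_nhds ⟨trivial, hθ⟩)

private lemma sec1 {F : ℝ × ℝ → ℝ} (hF : ContDiffOn ℝ 2 F (univ ×ˢ Ioo 0 1))
    {θ : ℝ} (hθ : θ ∈ Ioo (0:ℝ) 1) (q : ℝ) :
    HasDerivAt (fun y => F (y, θ)) (pd1 F (q, θ)) q :=
  hasDerivAt_comp_curve (diffS hF hθ) (curve1 q θ)

private lemma sec2 {F : ℝ × ℝ → ℝ} (hF : ContDiffOn ℝ 2 F (univ ×ˢ Ioo 0 1))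
    {θ : ℝ} (hθ : θ ∈ Ioo (0:ℝ) 1) (q : ℝ) :
    HasDerivAt (fun t => F (q, t)) (pd2 F (q, θ)) θ :=
  hasDerivAt_comp_curve (diffS hF hθ) (curve2 q θ)

private lemma pd1_diffAt {F : ℝ × ℝ → ℝ} (hF : ContDiffOn ℝ 2 F (univ ×ˢ Ioo 0 1))
    {q θ : ℝ} (hθ : θ ∈ Ioo (0:ℝ) 1) : DifferentiableAt ℝ (pd1 F) (q, θ) := by
  have h1 : ContDiffOn ℝ 1 (fderiv ℝ F) (univ ×ˢ Ioo 0 1) :=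
    hF.fderiv_of_isOpen isOpenS (by norm_num)
  have h2 : ContDiffOn ℝ 1 (pd1 F) (univ ×ˢ Ioo 0 1) := h1.clm_apply contDiffOn_const
  exact (h2.differentiableOn one_ne_zero).differentiableAt (isOpenS.mem_nhds ⟨trivial, hθ⟩)

private lemma d2qq {F : ℝ × ℝ → ℝ} (hF : ContDiffOn ℝ 2 F (univ ×ˢ Ioo 0 1))
    {θ : ℝ} (hθ : θ ∈ Ioo (0:ℝ) 1) (q : ℝ) :
    deriv (deriv (fun y => F (y, θ))) q = pd1 (pd1 F) (q, θ) := by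
  have h1 : deriv (fun y => F (y, θ)) = fun y => pd1 F (y, θ) :=
    funext fun y => (sec1 hF hθ y).deriv
  rw [h1]
  have h2 := (hasDerivAt_comp_curve (c := fun y => (y, θ)) (pd1_diffAt hF hθ) (curve1 q θ)).deriv
  rw [h2]; rfl

private lemma d2qt {F : ℝ × ℝ → ℝ} (hF : ContDiffOn ℝ 2 F (univ ×ˢ Ioo 0 1))
    {θ : ℝ} (hθ : θ ∈ Ioo (0:ℝ) 1) (q : ℝ) :
    deriv (fun t => deriv (fun y => F (y, t)) q) θ = pd2 (pd1 F) (q, θ) := by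
  have heq : (fun t => deriv (fun y => F (y, t)) q) =ᶠ[nhds θ] fun t => pd1 F (q, t) := by
    filter_upwards [Ioo_mem_nhds hθ.1 hθ.2] with t ht
    exact (sec1 hF ht q).deriv
  rw [heq.deriv_eq]
  have h2 := (hasDerivAt_comp_curve (c := fun t => (q, t)) (pd1_diffAt hF hθ) (curve2 q θ)).deriv
  rw [h2]; rfl

private noncomputable def CxF (V : ℝ → ℝ) (P I qhat : ℝ × ℝ → ℝ) (p : ℝ × ℝ) : ℝ :=
  pd1 I (qhat p, p.2) / (deriv V (qhat p) - pd1 P (qhat p, p.2))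

/-- Lemma A.1 (properties of the indirect investment cost function):
`V` is the buyer's gross utility, `P` the virtual production cost,
`I` the virtual investment cost (both functions of `(q, θ)` on `ℝ × (0,1)`),
`q̂(x,θ)` is the smaller root of `V(q) − P(q,θ) = x` (characterized by
`V'(q̂) − P_q(q̂,θ) > 0`) on an open rectangle `D`, and
`C(x,θ) = I(q̂(x,θ), θ)`. Then on `D`: `C_x > 0`, `C_θ > 0`, `C_{xx} > 0`
and `C_{xθ} > 0`; in particular `C` is strictly increasing in each argument,
strictly convex in `x`, and strictly supermodular in `(x,θ)`. -/
theorem stmt_6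
    (V : ℝ → ℝ) (hV : ContDiff ℝ 2 V) (hV'' : ∀ q, deriv (deriv V) q ≤ 0)
    (P I : ℝ × ℝ → ℝ)
    (hP : ContDiffOn ℝ 2 P (Set.univ ×ˢ Set.Ioo 0 1))
    (hI : ContDiffOn ℝ 2 I (Set.univ ×ˢ Set.Ioo 0 1))
    (hPθ : ∀ q : ℝ, ∀ θ ∈ Set.Ioo (0:ℝ) 1, 0 < deriv (fun t => P (q, t)) θ)
    (hPqq : ∀ q : ℝ, ∀ θ ∈ Set.Ioo (0:ℝ) 1, 0 < deriv (deriv (fun y => P (y, θ))) q)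
    (hPqθ : ∀ q : ℝ, ∀ θ ∈ Set.Ioo (0:ℝ) 1,
      0 ≤ deriv (fun t => deriv (fun y => P (y, t)) q) θ)
    (hIq : ∀ q : ℝ, ∀ θ ∈ Set.Ioo (0:ℝ) 1, 0 < deriv (fun y => I (y, θ)) q)
    (hIθ : ∀ q : ℝ, ∀ θ ∈ Set.Ioo (0:ℝ) 1, 0 < deriv (fun t => I (q, t)) θ)
    (hIqq : ∀ q : ℝ, ∀ θ ∈ Set.Ioo (0:ℝ) 1, 0 < deriv (deriv (fun y => I (y, θ))) q)
    (hIqθ : ∀ q : ℝ, ∀ θ ∈ Set.Ioo (0:ℝ) 1,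
      0 ≤ deriv (fun t => deriv (fun y => I (y, t)) q) θ)
    (x₁ x₂ θ₁ θ₂ : ℝ) (hrect : Set.Ioo θ₁ θ₂ ⊆ Set.Ioo (0:ℝ) 1)
    (D : Set (ℝ × ℝ)) (hD : D = Set.Ioo x₁ x₂ ×ˢ Set.Ioo θ₁ θ₂)
    (qhat : ℝ × ℝ → ℝ) (hqhat : ContDiffOn ℝ 1 qhat D)
    (hroot : ∀ p ∈ D, V (qhat p) - P (qhat p, p.2) = p.1)
    (hsmall : ∀ p ∈ D, 0 < deriv V (qhat p) - deriv (fun y => P (y, p.2)) (qhat p))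
    (C : ℝ → ℝ → ℝ) (hC : C = fun x θ => I (qhat (x, θ), θ)) :
    (∀ x θ, (x, θ) ∈ D →
      0 < deriv (fun x' => C x' θ) x ∧
      0 < deriv (fun t => C x t) θ ∧
      0 < deriv (deriv (fun x' => C x' θ)) x ∧
      0 < deriv (fun t => deriv (fun x' => C x' t) x) θ) ∧
    (∀ θ ∈ Set.Ioo θ₁ θ₂, StrictMonoOn (fun x => C x θ) (Set.Ioo x₁ x₂)) ∧
    (∀ x ∈ Set.Ioo x₁ x₂, StrictMonoOn (fun θ => C x θ) (Set.Ioo θ₁ θ₂)) ∧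
    (∀ θ ∈ Set.Ioo θ₁ θ₂, StrictConvexOn ℝ (Set.Ioo x₁ x₂) (fun x => C x θ)) ∧
    (∀ x x' θ θ', x ∈ Set.Ioo x₁ x₂ → x' ∈ Set.Ioo x₁ x₂ →
      θ ∈ Set.Ioo θ₁ θ₂ → θ' ∈ Set.Ioo θ₁ θ₂ → x < x' → θ < θ' →
      C x' θ + C x θ' < C x θ + C x' θ') := by
  subst hD hC
  have hDopen : IsOpen (Ioo x₁ x₂ ×ˢ Ioo θ₁ θ₂) := isOpen_Ioo.prod isOpen_Ioo
  have hV1 : Differentiable ℝ V := hV.differentiable two_ne_zero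
  have hV2 : Differentiable ℝ (deriv V) := by
    have h2 : ContDiff ℝ (1 + 1 : ℕ) V := by exact_mod_cast hV
    rw [show ((1 + 1 : ℕ) : WithTop ℕ∞) = (1 : ℕ∞) + 1 by norm_num] at h2
    exact (contDiff_succ_iff_deriv.mp h2).2.2.differentiable one_ne_zero
  -- the key pointwise facts
  have hkey : ∀ x θ, (x, θ) ∈ Ioo x₁ x₂ ×ˢ Ioo θ₁ θ₂ →
      (HasDerivAt (fun x' => I (qhat (x', θ), θ)) (CxF V P I qhat (x, θ)) x) ∧
      0 < CxF V P I qhat (x, θ) ∧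
      (∃ d, 0 < d ∧ HasDerivAt (fun t => I (qhat (x, t), t)) d θ) ∧
      (∃ d, 0 < d ∧ HasDerivAt (fun x' => CxF V P I qhat (x', θ)) d x) ∧
      (∃ d, 0 < d ∧ HasDerivAt (fun t => CxF V P I qhat (x, t)) d θ) := by
    intro x θ hp
    obtain ⟨hx, hθ⟩ := hp
    have hθ01 : θ ∈ Ioo (0:ℝ) 1 := hrect hθ
    have hqd : DifferentiableAt ℝ qhat (x, θ) :=
      (hqhat.differentiableOn one_ne_zero).differentiableAt (hDopen.mem_nhds ⟨hx, hθ⟩)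
    have hc1 : HasDerivAt (fun x' => qhat (x', θ)) (fderiv ℝ qhat (x, θ) (1, 0)) x :=
      hasDerivAt_comp_curve (c := fun x' => (x', θ)) hqd (curve1 x θ)
    have hc2 : HasDerivAt (fun t => qhat (x, t)) (fderiv ℝ qhat (x, θ) (0, 1)) θ :=
      hasDerivAt_comp_curve (c := fun t => (x, t)) hqd (curve2 x θ)
    have hcur1 : HasDerivAt (fun x' => (qhat (x', θ), θ))
        ((fderiv ℝ qhat (x, θ) (1, 0), (0:ℝ))) x := hc1.prodMk (hasDerivAt_const x θ)
    have hcur2 : HasDerivAt (fun t => (qhat (x, t), t))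
        ((fderiv ℝ qhat (x, θ) (0, 1), (1:ℝ))) θ := hc2.prodMk (hasDerivAt_id θ)
    have hden : 0 < deriv V (qhat (x, θ)) - pd1 P (qhat (x, θ), θ) := by
      have h := hsmall (x, θ) ⟨hx, hθ⟩
      simp only [] at h
      rwa [(sec1 hP hθ01 (qhat (x, θ))).deriv] at h
    -- partial derivatives, positivity
    have hIqpos : 0 < pd1 I (qhat (x, θ), θ) := by
      have h := hIq (qhat (x, θ)) θ hθ01
      rwa [(sec1 hI hθ01 (qhat (x, θ))).deriv] at h
    have hIθpos : 0 < pd2 I (qhat (x, θ), θ) := by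
      have h := hIθ (qhat (x, θ)) θ hθ01
      rwa [(sec2 hI hθ01 (qhat (x, θ))).deriv] at h
    have hPθpos : 0 < pd2 P (qhat (x, θ), θ) := by
      have h := hPθ (qhat (x, θ)) θ hθ01
      rwa [(sec2 hP hθ01 (qhat (x, θ))).deriv] at h
    have hIqqpos : 0 < pd1 (pd1 I) (qhat (x, θ), θ) := by
      have h := hIqq (qhat (x, θ)) θ hθ01
      rwa [d2qq hI hθ01 (qhat (x, θ))] at h
    have hPqqpos : 0 < pd1 (pd1 P) (qhat (x, θ), θ) := by
      have h := hPqq (qhat (x, θ)) θ hθ01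
      rwa [d2qq hP hθ01 (qhat (x, θ))] at h
    have hIqθnn : 0 ≤ pd2 (pd1 I) (qhat (x, θ), θ) := by
      have h := hIqθ (qhat (x, θ)) θ hθ01
      rwa [d2qt hI hθ01 (qhat (x, θ))] at h
    have hPqθnn : 0 ≤ pd2 (pd1 P) (qhat (x, θ), θ) := by
      have h := hPqθ (qhat (x, θ)) θ hθ01
      rwa [d2qt hP hθ01 (qhat (x, θ))] at h
    have hVq : deriv (deriv V) (qhat (x, θ)) ≤ 0 := hV'' _
    -- implicit differentiation in x
    have hPx : HasDerivAt (fun x' => P (qhat (x', θ), θ))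
        (fderiv ℝ qhat (x, θ) (1, 0) * pd1 P (qhat (x, θ), θ)) x := by
      have h := hasDerivAt_comp_curve (c := fun x' => (qhat (x', θ), θ))
        (diffS hP hθ01) hcur1
      rwa [fderiv_pair, zero_mul, add_zero] at h
    have hVcomp : HasDerivAt (fun x' => V (qhat (x', θ)))
        (deriv V (qhat (x, θ)) * fderiv ℝ qhat (x, θ) (1, 0)) x :=
      ((hV1 (qhat (x, θ))).hasDerivAt).comp x hc1
    have hid : deriv V (qhat (x, θ)) * fderiv ℝ qhat (x, θ) (1, 0)
        - fderiv ℝ qhat (x, θ) (1, 0) * pd1 P (qhat (x, θ), θ) = 1 := by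
      have hLx := hVcomp.sub hPx
      have hevx : (fun x' => V (qhat (x', θ)) - P (qhat (x', θ), θ)) =ᶠ[nhds x]
          fun x' => x' := by
        filter_upwards [Ioo_mem_nhds hx.1 hx.2] with x' hx'
        have := hroot (x', θ) ⟨hx', hθ⟩
        simpa using this
      have h1 : deriv (fun x' => V (qhat (x', θ)) - P (qhat (x', θ), θ)) x = _ := hLx.deriv
      rw [hevx.deriv_eq] at h1
      simpa using h1.symm
    have hqxval : fderiv ℝ qhat (x, θ) (1, 0)
        = 1 / (deriv V (qhat (x, θ)) - pd1 P (qhat (x, θ), θ)) := by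
      rw [eq_div_iff hden.ne']
      linear_combination hid
    have hqxpos : 0 < fderiv ℝ qhat (x, θ) (1, 0) := by
      rw [hqxval]; positivity
    -- implicit differentiation in θ
    have hPt : HasDerivAt (fun t => P (qhat (x, t), t))
        (fderiv ℝ qhat (x, θ) (0, 1) * pd1 P (qhat (x, θ), θ)
          + 1 * pd2 P (qhat (x, θ), θ)) θ := by
      have h := hasDerivAt_comp_curve (c := fun t => (qhat (x, t), t))
        (diffS hP hθ01) hcur2
      rwa [fderiv_pair] at h
    have hVcomp2 : HasDerivAt (fun t => V (qhat (x, t)))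
        (deriv V (qhat (x, θ)) * fderiv ℝ qhat (x, θ) (0, 1)) θ :=
      ((hV1 (qhat (x, θ))).hasDerivAt).comp θ hc2
    have hid2 : deriv V (qhat (x, θ)) * fderiv ℝ qhat (x, θ) (0, 1)
        - (fderiv ℝ qhat (x, θ) (0, 1) * pd1 P (qhat (x, θ), θ)
          + 1 * pd2 P (qhat (x, θ), θ)) = 0 := by
      have hLt := hVcomp2.sub hPt
      have hevt : (fun t => V (qhat (x, t)) - P (qhat (x, t), t)) =ᶠ[nhds θ]
          fun _ => x := by
        filter_upwards [Ioo_mem_nhds hθ.1 hθ.2] with t ht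
        have := hroot (x, t) ⟨hx, ht⟩
        simpa using this
      have h1 : deriv (fun t => V (qhat (x, t)) - P (qhat (x, t), t)) θ = _ := hLt.deriv
      rw [hevt.deriv_eq] at h1
      simpa using h1.symm
    have hqθpos : 0 < fderiv ℝ qhat (x, θ) (0, 1) := by
      nlinarith [hid2, hden, hPθpos]
    -- fact 1
    have hf1 : HasDerivAt (fun x' => I (qhat (x', θ), θ)) (CxF V P I qhat (x, θ)) x := by
      have h := hasDerivAt_comp_curve (c := fun x' => (qhat (x', θ), θ))
        (diffS hI hθ01) hcur1
      rw [fderiv_pair, zero_mul, add_zero] at h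
      convert h using 1
      simp only [CxF]
      rw [hqxval]
      ring
    refine ⟨hf1, ?_, ?_, ?_, ?_⟩
    · simp only [CxF]
      positivity
    -- fact 3: θ-derivative of C
    · have h := hasDerivAt_comp_curve (c := fun t => (qhat (x, t), t))
        (diffS hI hθ01) hcur2
      rw [fderiv_pair] at h
      exact ⟨_, by nlinarith [mul_pos hqθpos hIqpos], h⟩
    -- fact 4: x-derivative of Cx
    · have hNum : HasDerivAt (fun x' => pd1 I (qhat (x', θ), θ))
          (fderiv ℝ qhat (x, θ) (1, 0) * pd1 (pd1 I) (qhat (x, θ), θ)) x := by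
        have h := hasDerivAt_comp_curve (c := fun x' => (qhat (x', θ), θ))
          (pd1_diffAt hI hθ01) hcur1
        rwa [fderiv_pair, zero_mul, add_zero] at h
      have hVd2 : HasDerivAt (fun x' => deriv V (qhat (x', θ)))
          (deriv (deriv V) (qhat (x, θ)) * fderiv ℝ qhat (x, θ) (1, 0)) x :=
        HasDerivAt.comp (h₂ := deriv V) x ((hV2 (qhat (x, θ))).hasDerivAt) hc1
      have hPq2 : HasDerivAt (fun x' => pd1 P (qhat (x', θ), θ))
          (fderiv ℝ qhat (x, θ) (1, 0) * pd1 (pd1 P) (qhat (x, θ), θ)) x := by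
        have h := hasDerivAt_comp_curve (c := fun x' => (qhat (x', θ), θ))
          (pd1_diffAt hP hθ01) hcur1
        rwa [fderiv_pair, zero_mul, add_zero] at h
      have hdiv := hNum.div (hVd2.sub hPq2) hden.ne'
      simp only [Pi.sub_apply] at hdiv
      refine ⟨_, ?_, hdiv⟩
      apply div_pos
      · nlinarith [mul_pos (mul_pos hqxpos hIqqpos) hden,
          mul_pos hIqpos (mul_pos hqxpos hPqqpos),
          mul_nonneg hIqpos.le (mul_nonneg (neg_nonneg.mpr hVq) hqxpos.le)]
      · positivity
    -- fact 5: θ-derivative of Cx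
    · have hNum : HasDerivAt (fun t => pd1 I (qhat (x, t), t))
          (fderiv ℝ qhat (x, θ) (0, 1) * pd1 (pd1 I) (qhat (x, θ), θ)
            + 1 * pd2 (pd1 I) (qhat (x, θ), θ)) θ := by
        have h := hasDerivAt_comp_curve (c := fun t => (qhat (x, t), t))
          (pd1_diffAt hI hθ01) hcur2
        rwa [fderiv_pair] at h
      have hVd2 : HasDerivAt (fun t => deriv V (qhat (x, t)))
          (deriv (deriv V) (qhat (x, θ)) * fderiv ℝ qhat (x, θ) (0, 1)) θ :=
        HasDerivAt.comp (h₂ := deriv V) θ ((hV2 (qhat (x, θ))).hasDerivAt) hc2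
      have hPq2 : HasDerivAt (fun t => pd1 P (qhat (x, t), t))
          (fderiv ℝ qhat (x, θ) (0, 1) * pd1 (pd1 P) (qhat (x, θ), θ)
            + 1 * pd2 (pd1 P) (qhat (x, θ), θ)) θ := by
        have h := hasDerivAt_comp_curve (c := fun t => (qhat (x, t), t))
          (pd1_diffAt hP hθ01) hcur2
        rwa [fderiv_pair] at h
      have hdiv := hNum.div (hVd2.sub hPq2) hden.ne'
      simp only [Pi.sub_apply] at hdiv
      refine ⟨_, ?_, hdiv⟩
      apply div_pos
      · nlinarith [mul_pos (mul_pos hqθpos hIqqpos) hden,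
          mul_pos hIqpos (mul_pos hqθpos hPqqpos),
          mul_nonneg hIqpos.le hPqθnn,
          mul_nonneg hIqpos.le (mul_nonneg (neg_nonneg.mpr hVq) hqθpos.le),
          mul_nonneg hIqθnn hden.le]
      · positivity
  -- pointwise derivative statements
  have hpt : ∀ x θ, (x, θ) ∈ Ioo x₁ x₂ ×ˢ Ioo θ₁ θ₂ →
      0 < deriv (fun x' => I (qhat (x', θ), θ)) x ∧
      0 < deriv (fun t => I (qhat (x, t), t)) θ ∧
      0 < deriv (deriv (fun x' => I (qhat (x', θ), θ))) x ∧
      0 < deriv (fun t => deriv (fun x' => I (qhat (x', t), t)) x) θ := by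
    intro x θ hp
    obtain ⟨hx, hθ⟩ := hp
    obtain ⟨hf1, hf2, ⟨d3, hd3, hD3⟩, ⟨d4, hd4, hD4⟩, ⟨d5, hd5, hD5⟩⟩ := hkey x θ ⟨hx, hθ⟩
    refine ⟨by rw [hf1.deriv]; exact hf2, by rw [hD3.deriv]; exact hd3, ?_, ?_⟩
    · have hev : deriv (fun x' => I (qhat (x', θ), θ)) =ᶠ[nhds x]
          fun x' => CxF V P I qhat (x', θ) := by
        filter_upwards [Ioo_mem_nhds hx.1 hx.2] with x' hx'
        exact ((hkey x' θ ⟨hx', hθ⟩).1).deriv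
      rw [hev.deriv_eq, hD4.deriv]; exact hd4
    · have hev : (fun t => deriv (fun x' => I (qhat (x', t), t)) x) =ᶠ[nhds θ]
          fun t => CxF V P I qhat (x, t) := by
        filter_upwards [Ioo_mem_nhds hθ.1 hθ.2] with t ht
        exact ((hkey x t ⟨hx, ht⟩).1).deriv
      rw [hev.deriv_eq, hD5.deriv]; exact hd5
  refine ⟨hpt, ?_, ?_, ?_, ?_⟩
  -- strict monotonicity in x
  · intro θ hθ
    refine strictMonoOn_of_deriv_pos (convex_Ioo _ _) ?_ ?_
    · intro x hx
      exact (hkey x θ ⟨hx, hθ⟩).1.differentiableAt.continuousAt.continuousWithinAt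
    · intro x hx
      rw [interior_Ioo] at hx
      exact (hpt x θ ⟨hx, hθ⟩).1
  -- strict monotonicity in θ
  · intro x hx
    refine strictMonoOn_of_deriv_pos (convex_Ioo _ _) ?_ ?_
    · intro θ hθ
      obtain ⟨d, hd, hD⟩ := (hkey x θ ⟨hx, hθ⟩).2.2.1
      exact hD.differentiableAt.continuousAt.continuousWithinAt
    · intro θ hθ
      rw [interior_Ioo] at hθ
      exact (hpt x θ ⟨hx, hθ⟩).2.1
  -- strict convexity in x
  · intro θ hθ
    refine strictConvexOn_of_deriv2_pos (convex_Ioo _ _) ?_ ?_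
    · intro x hx
      exact (hkey x θ ⟨hx, hθ⟩).1.differentiableAt.continuousAt.continuousWithinAt
    · intro x hx
      rw [interior_Ioo] at hx
      have h := (hpt x θ ⟨hx, hθ⟩).2.2.1
      simpa [Function.iterate_succ, Function.iterate_zero] using h
  -- strict supermodularity
  · intro x x' θ θ' hx hx' hθ hθ' hxx hθθ
    have hm : StrictMonoOn (fun z => I (qhat (z, θ'), θ') - I (qhat (z, θ), θ))
        (Ioo x₁ x₂) := by
      refine strictMonoOn_of_deriv_pos (convex_Ioo _ _) ?_ ?_
      · intro z hz
        exact (((hkey z θ' ⟨hz, hθ'⟩).1.sub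
          (hkey z θ ⟨hz, hθ⟩).1).differentiableAt.continuousAt).continuousWithinAt
      · intro z hz
        rw [interior_Ioo] at hz
        rw [HasDerivAt.deriv (f := fun z => I (qhat (z, θ'), θ') - I (qhat (z, θ), θ))
          ((hkey z θ' ⟨hz, hθ'⟩).1.sub ((hkey z θ ⟨hz, hθ⟩).1))]
        have hmono : StrictMonoOn (fun t => CxF V P I qhat (z, t)) (Ioo θ₁ θ₂) := by
          refine strictMonoOn_of_deriv_pos (convex_Ioo _ _) ?_ ?_
          · intro t ht
            obtain ⟨d, hd0, hdd⟩ := (hkey z t ⟨hz, ht⟩).2.2.2.2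
            exact hdd.differentiableAt.continuousAt.continuousWithinAt
          · intro t ht
            rw [interior_Ioo] at ht
            obtain ⟨d, hd0, hdd⟩ := (hkey z t ⟨hz, ht⟩).2.2.2.2
            rw [hdd.deriv]; exact hd0
        have := hmono hθ hθ' hθθ
        simp only at this
        linarith
    have h2 := hm hx hx' hxx
    simp only at h2
    linarith
end

section
/- Let n ≥ 1 be an integer and let q, β, δ, E_P, E_I be real numbers with δ > 0, E_I > 0 (so 1 + E_I·δ ≠ 0). Let θ(·), v', g₁', g₂', F be functions such that 0 ≤ F(θ(q)) < 1. Suppose the first-order condition (1−F(θ(q)))^{n−1}·(v'(q) − (1+E_P·δ)·θ(q)^{E_P}·g₁'(q)) − β·(1+E_I·δ)·θ(q)^{E_I}·g₂'(q) = 0 holds, and that s'(q) = θ(q)^{E_P}·g₁'(q) + β·θ(q)^{E_I}·g₂'(q)/(1−F(θ(q)))^{n−1}. Then s'(q) = (v'(q) + δ·(E_I − E_P)·θ(q)^{E_P}·g₁'(q))/(1 + E_I·δ). -/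
theorem eq_div_of_first_order_condition {A v s P I δ EP EI : ℝ} (hA : A ≠ 0)
    (hd : 1 + EI * δ ≠ 0)
    (hFOC : A * (v - (1 + EP * δ) * P) - (1 + EI * δ) * I = 0) (hs : s = P + I / A) :
    s = (v + δ * (EI - EP) * P) / (1 + EI * δ) := by
  have hIA : (1 + EI * δ) * I / A = v - (1 + EP * δ) * P := by
    rw [div_eq_iff hA]
    linear_combination -hFOC
  rw [hs, eq_div_iff hd]
  linear_combination hIA

theorem stmt_10_general
    (n : ℕ) (q β δ EP EI : ℝ) (hδ : 0 < δ) (hEI : 0 < EI)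
    (th vd g1d g2d sd F : ℝ → ℝ)
    (hF1 : F (th q) < 1)
    (hFOC : (1 - F (th q)) ^ (n - 1)
        * (vd q - (1 + EP * δ) * th q ^ EP * g1d q)
      - β * (1 + EI * δ) * th q ^ EI * g2d q = 0)
    (hscore : sd q = th q ^ EP * g1d q
      + β * th q ^ EI * g2d q / (1 - F (th q)) ^ (n - 1)) :
    sd q = (vd q + δ * (EI - EP) * th q ^ EP * g1d q) / (1 + EI * δ) := by
  have hA : (1 - F (th q)) ^ (n - 1) ≠ 0 := pow_ne_zero _ (sub_ne_zero.2 hF1.ne')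
  have hd : 1 + EI * δ ≠ 0 := by positivity
  rw [eq_div_of_first_order_condition (v := vd q) (EP := EP) (P := th q ^ EP * g1d q)
    (I := β * th q ^ EI * g2d q) hA hd (by linear_combination hFOC) hscore]
  ring

/-- Key identity in the proof of Proposition 4 (elmatters): with
`F(θ) = θ^{1/δ}`, `C^P(q,θ) = θ^{E_P} g₁(q)`, `C^I(q,θ) = β θ^{E_I} g₂(q)`,
if the first-order condition
`(1−F(θ(q)))^{n−1}(v'(q) − (1+E_P δ)θ(q)^{E_P} g₁'(q)) − β(1+E_I δ)θ(q)^{E_I} g₂'(q) = 0`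
and the scoring-rule characterization
`s'(q) = θ(q)^{E_P} g₁'(q) + β θ(q)^{E_I} g₂'(q)/(1−F(θ(q)))^{n−1}` hold, then
`s'(q) = (v'(q) + δ(E_I − E_P)θ(q)^{E_P} g₁'(q))/(1 + E_I δ)`. -/
theorem stmt_10
    (n : ℕ) (hn : 1 ≤ n) (q β δ EP EI : ℝ) (hδ : 0 < δ) (hEI : 0 < EI)
    (th vd g1d g2d sd F : ℝ → ℝ)
    (hF0 : 0 ≤ F (th q)) (hF1 : F (th q) < 1)
    (hFOC : (1 - F (th q)) ^ (n - 1)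
        * (vd q - (1 + EP * δ) * th q ^ EP * g1d q)
      - β * (1 + EI * δ) * th q ^ EI * g2d q = 0)
    (hscore : sd q = th q ^ EP * g1d q
      + β * th q ^ EI * g2d q / (1 - F (th q)) ^ (n - 1)) :
    sd q = (vd q + δ * (EI - EP) * th q ^ EP * g1d q) / (1 + EI * δ) :=
  stmt_10_general n q β δ EP EI hδ hEI th vd g1d g2d sd F hF1 hFOC hscore
end

section
/- Let n ≥ 1 be an integer and let q, β, δ, E be real numbers with δ > 0, E > 0. Let θ(·), v', g₁', g₂', F be functions such that 0 ≤ F(θ(q)) < 1. Suppose the first-order condition (1−F(θ(q)))^{n−1}·(v'(q) − (1+E·δ)·θ(q)^{E}·g₁'(q)) − β·(1+E·δ)·θ(q)^{E}·g₂'(q) = 0 holds, and that s'(q) = θ(q)^{E}·g₁'(q) + β·θ(q)^{E}·g₂'(q)/(1−F(θ(q)))^{n−1}. Then s'(q) = v'(q)/(1 + δ·E); in particular the optimal scoring rule does not depend on n or β. -/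
theorem add_div_eq_div_of_mul_sub_mul_eq {K : Type*} [Field K] {a b c p v : K}
    (hp : p ≠ 0) (hc : c ≠ 0) (h : p * (v - c * a) = c * b) :
    a + b / p = v / c := by
  field_simp
  linear_combination -h

theorem stmt_11_general
    (n : ℕ) (q β δ E : ℝ) (hδ : 0 < δ) (hE : 0 < E)
    (th vd g1d g2d sd F : ℝ → ℝ)
    (hF1 : F (th q) < 1)
    (hFOC : (1 - F (th q)) ^ (n - 1)
        * (vd q - (1 + E * δ) * th q ^ E * g1d q)
      - β * (1 + E * δ) * th q ^ E * g2d q = 0)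
    (hscore : sd q = th q ^ E * g1d q
      + β * th q ^ E * g2d q / (1 - F (th q)) ^ (n - 1)) :
    sd q = vd q / (1 + δ * E) := by
  have hpow : (1 - F (th q)) ^ (n - 1) ≠ 0 := pow_ne_zero _ (sub_ne_zero.2 hF1.ne')
  have hc : 1 + E * δ ≠ 0 := by positivity
  rw [hscore, mul_comm δ E]
  exact add_div_eq_div_of_mul_sub_mul_eq hpow hc (by linear_combination hFOC)

/-- Equal-elasticity corollary of Proposition 4 (elmatters): with equal
elasticities `E_P = E_I = E`, the first-order condition
`(1−F(θ(q)))^{n−1}(v'(q) − (1+Eδ)θ(q)^E g₁'(q)) − β(1+Eδ)θ(q)^E g₂'(q) = 0`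
and the scoring-rule characterization
`s'(q) = θ(q)^E g₁'(q) + β θ(q)^E g₂'(q)/(1−F(θ(q)))^{n−1}` imply
`s'(q) = v'(q)/(1 + δE)`; in particular the optimal scoring rule does not
depend on `n` or `β`. -/
theorem stmt_11
    (n : ℕ) (hn : 1 ≤ n) (q β δ E : ℝ) (hδ : 0 < δ) (hE : 0 < E)
    (th vd g1d g2d sd F : ℝ → ℝ)
    (hF0 : 0 ≤ F (th q)) (hF1 : F (th q) < 1)
    (hFOC : (1 - F (th q)) ^ (n - 1)
        * (vd q - (1 + E * δ) * th q ^ E * g1d q)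
      - β * (1 + E * δ) * th q ^ E * g2d q = 0)
    (hscore : sd q = th q ^ E * g1d q
      + β * th q ^ E * g2d q / (1 - F (th q)) ^ (n - 1)) :
    sd q = vd q / (1 + δ * E) :=
  stmt_11_general n q β δ E hδ hE th vd g1d g2d sd F hF1 hFOC hscore
end

section
/- For every real α > 0, the function U(k) = (1/2)·k/(2k−1) − α/(k+1) is quasi-convex on [1, ∞): for all real numbers 1 ≤ k₁ ≤ k₂ ≤ k₃, U(k₂) ≤ max(U(k₁), U(k₃)). -/
/-!
For `1/2 < a, b` one has `U b - U a = (b - a) / ((a + 1) (b + 1)) · (α - r a · r b / 2)` with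
`r k = (k + 1) / (2k - 1)`, which is positive and decreasing on `(1/2, ∞)`. Hence if `U` increases
from `k₁` to `k₂`, then `α > r k₁ · r k₂ / 2 ≥ r k₂ · r k₃ / 2`, so `U` still increases from `k₂`
to `k₃`: `U` can go down and then up, but never up and then down.
-/

open Set

namespace EntryUtility

noncomputable def utility (α k : ℝ) : ℝ := (1 / 2) * (k / (2 * k - 1)) - α / (k + 1)

noncomputable def ratio (k : ℝ) : ℝ := (k + 1) / (2 * k - 1)

lemma ratio_pos {k : ℝ} (hk : 1 / 2 < k) : 0 < ratio k :=
  div_pos (by linarith) (by linarith)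

lemma ratio_antitoneOn : AntitoneOn ratio (Ioi (1 / 2)) := by
  intro a ha b hb hab
  simp only [mem_Ioi] at ha hb
  rw [ratio, ratio, div_le_div_iff₀ (by linarith) (by linarith)]
  nlinarith

lemma utility_sub_utility (α : ℝ) {a b : ℝ} (ha : 1 / 2 < a) (hb : 1 / 2 < b) :
    utility α b - utility α a =
      (b - a) / ((a + 1) * (b + 1)) * (α - ratio a * ratio b / 2) := by
  have ha' : 2 * a - 1 ≠ 0 := by linarith
  have hb' : 2 * b - 1 ≠ 0 := by linarith
  have ha'' : a + 1 ≠ 0 := by linarith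
  have hb'' : b + 1 ≠ 0 := by linarith
  simp only [utility, ratio]
  field_simp
  ring

lemma utility_le_max (α : ℝ) {x y z : ℝ} (hx : 1 / 2 < x) (hxy : x ≤ y) (hyz : y ≤ z) :
    utility α y ≤ max (utility α x) (utility α z) := by
  have hy : 1 / 2 < y := hx.trans_le hxy
  have hz : 1 / 2 < z := hy.trans_le hyz
  rcases le_or_gt (utility α y) (utility α x) with hdown | hup
  · exact le_max_of_le_left hdown
  refine le_max_of_le_right ?_
  have hxy' : x < y := lt_of_le_of_ne hxy (by rintro rfl; exact lt_irrefl _ hup)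
  have hgain : 0 < α - ratio x * ratio y / 2 := by
    have hincr := utility_sub_utility α hx hy
    refine pos_of_mul_pos_right (hincr ▸ sub_pos.mpr hup) (div_nonneg ?_ ?_) <;> nlinarith
  have hratio : ratio y * ratio z ≤ ratio x * ratio y := by
    rw [mul_comm (ratio x)]
    exact mul_le_mul_of_nonneg_left (ratio_antitoneOn hx hz (hxy.trans hyz)) (ratio_pos hy).le
  have hstep : 0 ≤ utility α z - utility α y := by
    rw [utility_sub_utility α hy hz]
    exact mul_nonneg (div_nonneg (by linarith) (by nlinarith)) (by linarith)
  linarith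

end EntryUtility

theorem stmt_15_general (α : ℝ) (U : ℝ → ℝ)
    (hU : ∀ k, U k = (1 / 2) * (k / (2 * k - 1)) - α / (k + 1))
    (k₁ k₂ k₃ : ℝ) (h1 : 1 ≤ k₁) (h12 : k₁ ≤ k₂) (h23 : k₂ ≤ k₃) :
    U k₂ ≤ max (U k₁) (U k₃) := by
  obtain rfl : U = EntryUtility.utility α := funext hU
  exact EntryUtility.utility_le_max α (by linarith) h12 h23

/-- Worked example after Proposition 11: for every `α > 0`, the buyer's utility
`U(k) = (1/2)·k/(2k−1) − α/(k+1)` is quasi-convex on `[1,∞)`: for all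
`1 ≤ k₁ ≤ k₂ ≤ k₃`, `U(k₂) ≤ max (U(k₁)) (U(k₃))`. -/
theorem stmt_15 (α : ℝ) (hα : 0 < α) (U : ℝ → ℝ)
    (hU : ∀ k, U k = (1 / 2) * (k / (2 * k - 1)) - α / (k + 1))
    (k₁ k₂ k₃ : ℝ) (h1 : 1 ≤ k₁) (h12 : k₁ ≤ k₂) (h23 : k₂ ≤ k₃) :
    U k₂ ≤ max (U k₁) (U k₃) :=
  stmt_15_general α U hU k₁ k₂ k₃ h1 h12 h23
end
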